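/- arXiv:2107.12102 — 2 statements merged into one kernel-verified Lean document; each statement's English description precedes it below -/
import Mathlib

section
/- Let 0 < α < π/2 be fixed, and for integers D ≥ 1 define I_D(α) = ∫₀^α sin^D(x) dx. Then I_D(α) = sin^{D+1}(α)/(D cos(α)) − R_D, where 0 ≤ R_D ≤ sin^{D+1}(α)/(D cos³(α)); in particular, |I_D(α) − sin^{D+1}(α)/(D cos α)| ≤ sin^{D+1}(α)/(D cos³ α). -/
open Real intervalIntegral

theorem integral_sin_pow_mul_cos (a b : ℝ) (n : ℕ) :
    ∫ x in a..b, sin x ^ n * cos x = (sin b ^ (n + 1) - sin a ^ (n + 1)) / (n + 1) := by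
  simpa [integral_pow] using integral_sin_pow_mul_cos_pow_odd (a := a) (b := b) n 0

theorem integral_sin_pow_nonneg {a : ℝ} (ha0 : 0 ≤ a) (ha : a ≤ π) (n : ℕ) :
    0 ≤ ∫ x in (0:ℝ)..a, sin x ^ n :=
  integral_nonneg ha0 fun _ hx =>
    pow_nonneg (sin_nonneg_of_nonneg_of_le_pi hx.1 (hx.2.trans ha)) n

/-- `cos` decreases on `[0, a]`, so `cos a` may be moved inside the integral as `cos x`, after
which `integral_sin_pow_mul_cos` evaluates it. -/
theorem integral_sin_pow_le {a : ℝ} (ha0 : 0 ≤ a) (ha : a < π / 2) (n : ℕ) :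
    ∫ x in (0:ℝ)..a, sin x ^ n ≤ sin a ^ (n + 1) / ((n + 1) * cos a) := by
  have hcos : 0 < cos a := cos_pos_of_mem_Ioo ⟨by linarith [pi_pos], ha⟩
  have hmono : (∫ x in (0:ℝ)..a, sin x ^ n) * cos a ≤ ∫ x in (0:ℝ)..a, sin x ^ n * cos x := by
    rw [← integral_mul_const]
    refine integral_mono_on ha0 (by apply Continuous.intervalIntegrable; fun_prop)
      (by apply Continuous.intervalIntegrable; fun_prop) fun x hx => ?_
    have hsin : 0 ≤ sin x := sin_nonneg_of_nonneg_of_le_pi hx.1 (by linarith [hx.2, pi_pos])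
    exact mul_le_mul_of_nonneg_left (cos_le_cos_of_nonneg_of_le_pi hx.1 (by linarith) hx.2)
      (pow_nonneg hsin n)
  rw [integral_sin_pow_mul_cos, sin_zero, zero_pow n.succ_ne_zero, sub_zero] at hmono
  rw [le_div_iff₀ (by positivity), ← mul_assoc, mul_comm _ ((n:ℝ) + 1), mul_assoc]
  rwa [le_div_iff₀' (by positivity)] at hmono

theorem stmt_5 (α : ℝ) (hα0 : 0 < α) (hα : α < Real.pi / 2) (D : ℕ) (hD : 1 ≤ D) :
    ∃ R : ℝ,
      (∫ x in (0:ℝ)..α, Real.sin x ^ D) =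
          Real.sin α ^ (D + 1) / (D * Real.cos α) - R ∧
      0 ≤ R ∧ R ≤ Real.sin α ^ (D + 1) / (D * Real.cos α ^ 3) ∧
      |(∫ x in (0:ℝ)..α, Real.sin x ^ D) - Real.sin α ^ (D + 1) / (D * Real.cos α)| ≤
        Real.sin α ^ (D + 1) / (D * Real.cos α ^ 3) := by
  set I := ∫ x in (0:ℝ)..α, sin x ^ D
  have hcos : 0 < cos α := cos_pos_of_mem_Ioo ⟨by linarith [pi_pos], hα⟩
  have hsin : 0 < sin α := sin_pos_of_pos_of_lt_pi hα0 (by linarith [pi_pos])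
  have hD0 : (0:ℝ) < D := by exact_mod_cast hD
  have hI_nonneg : 0 ≤ I := integral_sin_pow_nonneg hα0.le (by linarith [pi_pos]) D
  have hI_le : I ≤ sin α ^ (D + 1) / (D * cos α) :=
    (integral_sin_pow_le hα0.le hα D).trans <|
      div_le_div_of_nonneg_left (by positivity) (by positivity) (by gcongr; linarith)
  have hmain_le : sin α ^ (D + 1) / (D * cos α) ≤ sin α ^ (D + 1) / (D * cos α ^ 3) :=
    div_le_div_of_nonneg_left (by positivity) (by positivity)
      (by gcongr; nlinarith [cos_le_one α, mul_pos hcos hcos])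
  refine ⟨sin α ^ (D + 1) / (D * cos α) - I, by ring, by linarith, by linarith, ?_⟩
  rw [abs_sub_comm, abs_of_nonneg (by linarith)]
  linarith
end

section
/- Let 0 < α < π/2 and D ≥ 1 an integer. Then 0 < ∫₀^α sin^D(x)/cos²(x) dx ≤ sin^{D+1}(α)/(D cos³(α)). -/
/-!
Up to the factor `1 / D`, the integrand is dominated by the derivative
`(D + 1) sin ^ D / cos ^ 2 + 3 sin ^ (D + 2) / cos ^ 4` of `sin ^ (D + 1) / cos ^ 3`,
which vanishes at `0`; positivity holds because the integrand is positive on `(0, α)`.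
-/

open Real Set intervalIntegral

lemma continuousOn_sin_pow_div_cos_pow (n m : ℕ) :
    ContinuousOn (fun x => sin x ^ n / cos x ^ m) (Ioo (-(π / 2)) (π / 2)) :=
  (by fun_prop : Continuous fun x => sin x ^ n).continuousOn.div (by fun_prop)
    fun x hx => pow_ne_zero _ (cos_pos_of_mem_Ioo hx).ne'

lemma intervalIntegrable_sin_pow_div_cos_pow (n m : ℕ) {a b : ℝ}
    (h : uIcc a b ⊆ Ioo (-(π / 2)) (π / 2)) :
    IntervalIntegrable (fun x => sin x ^ n / cos x ^ m) MeasureTheory.volume a b :=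
  ((continuousOn_sin_pow_div_cos_pow n m).mono h).intervalIntegrable

lemma hasDerivAt_sin_pow_div_cos_pow (n m : ℕ) {x : ℝ} (hx : cos x ≠ 0) :
    HasDerivAt (fun y => sin y ^ (n + 1) / cos y ^ (m + 1))
      ((n + 1) * (sin x ^ n / cos x ^ m) + (m + 1) * (sin x ^ (n + 2) / cos x ^ (m + 2))) x := by
  have hsin : HasDerivAt (fun y => sin y ^ (n + 1)) ((n + 1) * sin x ^ n * cos x) x := by
    simpa using (hasDerivAt_sin x).fun_pow (n + 1)
  have hcos : HasDerivAt (fun y => cos y ^ (m + 1)) ((m + 1) * cos x ^ m * -sin x) x := by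
    simpa using (hasDerivAt_cos x).fun_pow (m + 1)
  refine (hsin.div hcos (pow_ne_zero _ hx)).congr_deriv ?_
  field_simp
  ring

lemma integral_sin_pow_div_cos_pow_add (n m : ℕ) {a b : ℝ}
    (h : uIcc a b ⊆ Ioo (-(π / 2)) (π / 2)) :
    ∫ x in a..b,
        (n + 1) * (sin x ^ n / cos x ^ m) + (m + 1) * (sin x ^ (n + 2) / cos x ^ (m + 2)) =
      sin b ^ (n + 1) / cos b ^ (m + 1) - sin a ^ (n + 1) / cos a ^ (m + 1) :=
  integral_eq_sub_of_hasDerivAt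
    (fun _ hx => hasDerivAt_sin_pow_div_cos_pow n m (cos_pos_of_mem_Ioo (h hx)).ne')
    (((intervalIntegrable_sin_pow_div_cos_pow n m h).const_mul _).add
      ((intervalIntegrable_sin_pow_div_cos_pow (n + 2) (m + 2) h).const_mul _))

lemma nat_mul_sin_pow_div_cos_pow_le {x : ℝ} (hs : 0 ≤ sin x) (hc : 0 ≤ cos x) (n m : ℕ) :
    n * (sin x ^ n / cos x ^ m) ≤
      (n + 1) * (sin x ^ n / cos x ^ m) + (m + 1) * (sin x ^ (n + 2) / cos x ^ (m + 2)) := by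
  have : 0 ≤ sin x ^ n / cos x ^ m := by positivity
  have : 0 ≤ sin x ^ (n + 2) / cos x ^ (m + 2) := by positivity
  nlinarith

theorem stmt_6 (α : ℝ) (hα0 : 0 < α) (hα : α < Real.pi / 2) (D : ℕ) (hD : 1 ≤ D) :
    0 < (∫ x in (0:ℝ)..α, Real.sin x ^ D / Real.cos x ^ 2) ∧
    (∫ x in (0:ℝ)..α, Real.sin x ^ D / Real.cos x ^ 2) ≤
      Real.sin α ^ (D + 1) / (D * Real.cos α ^ 3) := by
  have hsub : uIcc 0 α ⊆ Ioo (-(π / 2)) (π / 2) := by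
    rw [uIcc_of_le hα0.le]
    exact fun x hx => ⟨by linarith [hx.1, pi_pos], by linarith [hx.2]⟩
  have hint := intervalIntegrable_sin_pow_div_cos_pow D 2 hsub
  refine ⟨intervalIntegral_pos_of_pos_on hint (fun x hx => ?_) hα0, ?_⟩
  · have hc := cos_pos_of_mem_Ioo (hsub (Ioo_subset_Icc_self.trans Icc_subset_uIcc hx))
    have hs := sin_pos_of_pos_of_lt_pi hx.1 (by linarith [hx.2, pi_pos])
    positivity
  · have hD' : (0 : ℝ) < D := by exact_mod_cast hD
    rw [div_mul_eq_div_div_swap, le_div_iff₀' hD', ← integral_const_mul]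
    calc
      ∫ x in (0 : ℝ)..α, (D : ℝ) * (sin x ^ D / cos x ^ 2)
        ≤ ∫ x in (0 : ℝ)..α, ((D : ℝ) + 1) * (sin x ^ D / cos x ^ 2) +
            ((2 : ℕ) + 1) * (sin x ^ (D + 2) / cos x ^ (2 + 2)) := by
          refine integral_mono_on hα0.le (hint.const_mul _)
            ((hint.const_mul _).add ((intervalIntegrable_sin_pow_div_cos_pow _ _ hsub).const_mul _))
            fun x hx => ?_
          exact nat_mul_sin_pow_div_cos_pow_le
            (sin_nonneg_of_nonneg_of_le_pi hx.1 (by linarith [hx.2, pi_pos]))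
            (cos_pos_of_mem_Ioo (hsub (Icc_subset_uIcc hx))).le D 2
      _ = sin α ^ (D + 1) / cos α ^ 3 := by
          rw [integral_sin_pow_div_cos_pow_add D 2 hsub]
          simp
end
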